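/- arXiv:2309.16392 — 2 statements merged into one kernel-verified Lean document; each statement's English description precedes it below -/
import Mathlib

section
/- Consider the equation dw/dz = P(z,w)/(z·Q(z,w)) with P, Q ∈ ℂ[z,w], and let f(z,w) be an irreducible strict Darboux polynomial of this equation with cofactor R_f, i.e., z·Q(z,w)·∂f/∂z + P(z,w)·∂f/∂w = R_f(z,w)·f(z,w). Then f(0,w) is a nonzero polynomial in w, it satisfies P(0,w)·(∂f/∂w)(0,w) = R_f(0,w)·f(0,w), and every complex root of f(0,w) is a root of P(0,w); consequently f(0,w) is a nonzero constant multiple of Π_{i=1}^{k}(w − a_i)^{l_i} for some nonnegative integers l_i, where a_1, ..., a_k are the roots of P(0,w) = 0. -/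
open MvPolynomial

noncomputable section

/-- Formal derivative of a power series. -/
def dSeries (φ : PowerSeries ℂ) : PowerSeries ℂ :=
  PowerSeries.mk fun k => ((k + 1 : ℕ) : ℂ) * PowerSeries.coeff (R := ℂ) (k + 1) φ

/-- The power series `Σ_k c(k/N) t^k` encoding the Puiseux series with coefficient
function `c` after the substitution `z = t^N`. -/
def toSeries (N : ℕ) (c : ℚ → ℂ) : PowerSeries ℂ :=
  PowerSeries.mk fun k => c ((k : ℚ) / (N : ℚ))

/-- Substitute `z = t^N`, `w = φ(t)` into a bivariate polynomial (variable `0` is `z`,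
variable `1` is `w`). -/
def substS (P : MvPolynomial (Fin 2) ℂ) (N : ℕ) (φ : PowerSeries ℂ) : PowerSeries ℂ :=
  MvPolynomial.aeval ![(PowerSeries.X : PowerSeries ℂ) ^ N, φ] P

/-- `c : ℚ → ℂ` encodes a formal Puiseux series `w(z) = Σ_q c(q)·z^q`, supported on
strictly positive exponents with a common denominator `N`, which formally satisfies
the differential equation `Q(z,w)·dw/dz = P(z,w)` (after the substitution `z = t^N`
this reads `Q(t^N,φ(t))·φ'(t) = N·t^(N-1)·P(t^N,φ(t))`). -/
def IsPuiseuxSol (P Q : MvPolynomial (Fin 2) ℂ) (c : ℚ → ℂ) : Prop :=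
  ∃ N : ℕ, 0 < N ∧ (∀ q : ℚ, c q ≠ 0 → 0 < q ∧ ∃ k : ℕ, q = (k : ℚ) / (N : ℚ)) ∧
    substS Q N (toSeries N c) * dSeries (toSeries N c) =
      (N : PowerSeries ℂ) * (PowerSeries.X : PowerSeries ℂ) ^ (N - 1) *
        substS P N (toSeries N c)

/-- Shift the origin of coordinates to `(z0, w0)`. -/
def shiftP (P : MvPolynomial (Fin 2) ℂ) (z0 w0 : ℂ) : MvPolynomial (Fin 2) ℂ :=
  MvPolynomial.aeval ![(X 0 : MvPolynomial (Fin 2) ℂ) + C z0, (X 1 : MvPolynomial (Fin 2) ℂ) + C w0] P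

/-- The set of nonconstant local algebraic solutions of `Q(z,w)·dw/dz = P(z,w)` at the
point `(z0, w0)`, encoded by their Puiseux coefficient functions in the shifted
variables. -/
def localSols (P Q : MvPolynomial (Fin 2) ℂ) (z0 w0 : ℂ) : Set (ℚ → ℂ) :=
  {c | c ≠ 0 ∧ IsPuiseuxSol (shiftP P z0 w0) (shiftP Q z0 w0) c}

/-- The algebraic multiplicity `Mul(z0,w0)` of the equation `Q·dw/dz = P`:
the number of distinct nonconstant local algebraic solutions at `(z0,w0)`. -/
def mulAt (P Q : MvPolynomial (Fin 2) ℂ) (z0 w0 : ℂ) : ℕ∞ :=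
  (localSols P Q z0 w0).encard

/-- `(z0,w0)` is algebraic critical for `Q·dw/dz = P`. -/
def IsAlgCritical (P Q : MvPolynomial (Fin 2) ℂ) (z0 w0 : ℂ) : Prop :=
  (localSols P Q z0 w0).Infinite

/-- `w^d · P(z, 1/w)`. -/
def invW (P : MvPolynomial (Fin 2) ℂ) (d : ℕ) : MvPolynomial (Fin 2) ℂ :=
  ∑ m ∈ P.support, MvPolynomial.monomial
    (Finsupp.single (0 : Fin 2) (m 0) + Finsupp.single (1 : Fin 2) (d - m 1))
    (MvPolynomial.coeff m P)

/-- The algebraic multiplicity `Mul(z0,∞)` for the equation `Q·dw/dz = P`, i.e. the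
multiplicity at `(z0,0)` of the equation `dw̄/dz = -w̄²·(P/Q)(z,1/w̄)` satisfied by
`w̄ = 1/w` (with numerator and denominator cleared by `w̄^d`). -/
def mulAtInf (P Q : MvPolynomial (Fin 2) ℂ) (z0 : ℂ) : ℕ∞ :=
  mulAt (-((X 1 : MvPolynomial (Fin 2) ℂ) ^ 2 * invW P (max (P.degreeOf 1) (Q.degreeOf 1))))
    (invW Q (max (P.degreeOf 1) (Q.degreeOf 1))) z0 0

/-- `(z0,∞)` is algebraic critical for `Q·dw/dz = P`. -/
def IsAlgCriticalInf (P Q : MvPolynomial (Fin 2) ℂ) (z0 : ℂ) : Prop :=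
  IsAlgCritical (-((X 1 : MvPolynomial (Fin 2) ℂ) ^ 2 * invW P (max (P.degreeOf 1) (Q.degreeOf 1))))
    (invW Q (max (P.degreeOf 1) (Q.degreeOf 1))) z0 0

/-- `f` is a Darboux polynomial of the system `ż = A, ẇ = B` with cofactor `R`. -/
def IsDarboux (A B f R : MvPolynomial (Fin 2) ℂ) : Prop :=
  A * MvPolynomial.pderiv 0 f + B * MvPolynomial.pderiv 1 f = R * f

/-- `f` is strict: it has no factor of the form `z - z0` or `w - w0`. -/
def IsStrict (f : MvPolynomial (Fin 2) ℂ) : Prop :=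
  ∀ a : ℂ, ¬((X 0 : MvPolynomial (Fin 2) ℂ) - C a ∣ f) ∧ ¬((X 1 : MvPolynomial (Fin 2) ℂ) - C a ∣ f)

end
/-- Evaluation of a bivariate polynomial at `z = 0`, as a polynomial in `w`. -/
noncomputable def atZ0 (g : MvPolynomial (Fin 2) ℂ) : Polynomial ℂ :=
  MvPolynomial.aeval ![(0 : Polynomial ℂ), (Polynomial.X : Polynomial ℂ)] g


section AuxAtZ0

open Polynomial

lemma fin2_single_aux (m : Fin 2 →₀ ℕ) (h0 : m 0 = 0) : m = Finsupp.single 1 (m 1) := by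
  ext i; fin_cases i <;> simp [h0]

lemma atZ0_coeff (g : MvPolynomial (Fin 2) ℂ) (n : ℕ) :
    (atZ0 g).coeff n = MvPolynomial.coeff (Finsupp.single 1 n) g := by
  classical
  unfold atZ0
  rw [MvPolynomial.aeval_def, MvPolynomial.eval₂_eq', Polynomial.finset_sum_coeff]
  have key : ∀ m : Fin 2 →₀ ℕ,
      ((algebraMap ℂ ℂ[X]) (MvPolynomial.coeff m g) * ∏ i, ![(0:ℂ[X]), X] i ^ m i).coeff n
        = if m = Finsupp.single 1 n then MvPolynomial.coeff m g else 0 := by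
    intro m
    rcases eq_or_ne (m 0) 0 with h0 | h0
    · have hm := fin2_single_aux m h0
      rcases eq_or_ne (m 1) n with h1 | h1
      · have hms : m = Finsupp.single 1 n := by rw [hm, h1]
        rw [if_pos hms]
        simp [Fin.prod_univ_two, h0, h1, Polynomial.coeff_C_mul, Polynomial.coeff_X_pow]
      · have hms : m ≠ Finsupp.single 1 n := by
          intro h; apply h1; rw [h]; simp
        rw [if_neg hms]
        simp [Fin.prod_univ_two, h0, Polynomial.coeff_C_mul, Polynomial.coeff_X_pow, Ne.symm h1]
    · have hms : m ≠ Finsupp.single 1 n := by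
        intro h; apply h0; rw [h]; simp
      rw [if_neg hms]
      simp [Fin.prod_univ_two, zero_pow h0]
  simp_rw [key]
  rw [Finset.sum_ite_eq' g.support]
  split_ifs with h
  · rfl
  · exact (MvPolynomial.notMem_support_iff.mp h).symm

lemma atZ0_pderiv (g : MvPolynomial (Fin 2) ℂ) :
    atZ0 (MvPolynomial.pderiv 1 g) = Polynomial.derivative (atZ0 g) := by
  induction g using MvPolynomial.induction_on with
  | C a => simp [atZ0]
  | add p q hp hq => simp [atZ0, map_add] at hp hq ⊢; rw [hp, hq]
  | mul_X p n hp =>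
    rw [pderiv_mul]
    simp only [atZ0, map_add, map_mul] at hp ⊢
    rw [derivative_mul, hp]
    congr 1
    fin_cases n <;> simp

lemma eval_atZ0 (g : MvPolynomial (Fin 2) ℂ) (a : ℂ) :
    Polynomial.eval a (atZ0 g) = MvPolynomial.eval ![(0 : ℂ), a] g := by
  induction g using MvPolynomial.induction_on with
  | C c => simp [atZ0]
  | add p q hp hq => simp [atZ0, map_add] at hp hq ⊢; rw [hp, hq]
  | mul_X p n hp =>
    simp only [atZ0, map_mul] at hp ⊢
    rw [Polynomial.eval_mul, hp]
    congr 1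
    fin_cases n <;> simp

lemma atZ0_ne_zero_of_strict (f : MvPolynomial (Fin 2) ℂ) (hstrict : IsStrict f) :
    atZ0 f ≠ 0 := by
  intro h
  apply (hstrict 0).1
  rw [map_zero, sub_zero]
  classical
  conv_rhs => rw [← f.support_sum_monomial_coeff]
  apply Finset.dvd_sum
  intro m _
  rw [MvPolynomial.X_dvd_monomial]
  rcases eq_or_ne (m 0) 0 with h0 | h0
  · left
    have hc : MvPolynomial.coeff (Finsupp.single 1 (m 1)) f = 0 := by
      rw [← atZ0_coeff, h, Polynomial.coeff_zero]
    rwa [← fin2_single_aux m h0] at hc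
  · exact Or.inr h0

end AuxAtZ0

/-- **(paper, proof of Thm 2).** If `f` is an irreducible strict Darboux polynomial of
`dw/dz = P/(z·Q)` with cofactor `R`, then `f(0,w)` is a nonzero polynomial in `w`,
it satisfies `P(0,w)·f_w(0,w) = R(0,w)·f(0,w)`, every root of `f(0,w)` is a root of
`P(0,w)`, and consequently `f(0,w)` is a nonzero constant multiple of
`Π_{a ∈ S}(w - a)^(l a)` where `S` is the set of roots of `P(0,w) = 0`. -/
theorem atZ0_darboux_factorization (P Q f R : MvPolynomial (Fin 2) ℂ)
    (hf : Irreducible f) (hstrict : IsStrict f)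
    (hDarboux : IsDarboux ((X 0 : MvPolynomial (Fin 2) ℂ) * Q) P f R)
    (S : Finset ℂ) (hS : ∀ a : ℂ, a ∈ S ↔ MvPolynomial.eval ![(0 : ℂ), a] P = 0) :
    atZ0 f ≠ 0 ∧
    atZ0 P * atZ0 (MvPolynomial.pderiv 1 f) = atZ0 R * atZ0 f ∧
    (∀ α : ℂ, Polynomial.eval α (atZ0 f) = 0 → Polynomial.eval α (atZ0 P) = 0) ∧
    ∃ u : ℂ, u ≠ 0 ∧ ∃ l : ℂ → ℕ,
      atZ0 f = Polynomial.C u * ∏ a ∈ S, (Polynomial.X - Polynomial.C a) ^ l a := by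
  classical
  have hF : atZ0 f ≠ 0 := atZ0_ne_zero_of_strict f hstrict
  have hid : atZ0 P * atZ0 (MvPolynomial.pderiv 1 f) = atZ0 R * atZ0 f := by
    have h := congrArg atZ0 hDarboux
    simp only [atZ0, map_add, map_mul, MvPolynomial.aeval_X, Matrix.cons_val_zero,
      zero_mul, zero_add] at h
    exact h
  have hid' : atZ0 P * Polynomial.derivative (atZ0 f) = atZ0 R * atZ0 f := by
    rw [← atZ0_pderiv]; exact hid
  have hroot : ∀ α : ℂ, Polynomial.eval α (atZ0 f) = 0 → Polynomial.eval α (atZ0 P) = 0 := by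
    intro α hα
    by_cases hp : atZ0 P = 0
    · simp [hp]
    have hFroot : (atZ0 f).IsRoot α := hα
    by_cases hF' : Polynomial.derivative (atZ0 f) = 0
    · exfalso
      have hdeg : (atZ0 f).natDegree = 0 :=
        Polynomial.natDegree_eq_zero_of_derivative_eq_zero hF'
      have hC := Polynomial.eq_C_of_natDegree_eq_zero hdeg
      rw [hC] at hα
      simp only [Polynomial.eval_C] at hα
      rw [hC, hα, map_zero] at hF
      exact hF rfl
    have hne : atZ0 P * Polynomial.derivative (atZ0 f) ≠ 0 := mul_ne_zero hp hF'
    have hne' : atZ0 R * atZ0 f ≠ 0 := by rw [← hid']; exact hne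
    have h1 := Polynomial.rootMultiplicity_mul (x := α) hne
    have h2 := Polynomial.rootMultiplicity_mul (x := α) hne'
    rw [hid'] at h1
    rw [h2] at h1
    have hd := Polynomial.derivative_rootMultiplicity_of_root hFroot
    have hk := (Polynomial.rootMultiplicity_pos hF).2 hFroot
    have hpos : 0 < Polynomial.rootMultiplicity α (atZ0 P) := by omega
    exact (Polynomial.rootMultiplicity_pos hp).1 hpos
  refine ⟨hF, hid, hroot, (atZ0 f).leadingCoeff, Polynomial.leadingCoeff_ne_zero.mpr hF,
    (fun a => (atZ0 f).rootMultiplicity a), ?_⟩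
  have hsplit : (atZ0 f).Splits := IsAlgClosed.splits _
  have hprod := Polynomial.Splits.eq_prod_roots hsplit
  have hsub : (atZ0 f).roots.toFinset ⊆ S := by
    intro a ha
    rw [Multiset.mem_toFinset, Polynomial.mem_roots hF] at ha
    rw [hS, ← eval_atZ0]
    exact hroot a ha
  have hmain : (Multiset.map (fun a => Polynomial.X - Polynomial.C a) (atZ0 f).roots).prod
      = ∏ a ∈ S, (Polynomial.X - Polynomial.C a) ^ (atZ0 f).rootMultiplicity a := by
    rw [Finset.prod_multiset_map_count]
    simp_rw [Polynomial.count_roots]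
    refine Finset.prod_subset hsub ?_
    intro a _ ha
    rw [Multiset.mem_toFinset, Polynomial.mem_roots hF] at ha
    rw [Polynomial.rootMultiplicity_eq_zero ha, pow_zero]
  conv_lhs => rw [hprod]
  rw [hmain]
end

section
/- Consider the equation (z + w²)·dw/dz = z² + μ·w with μ ∈ ℚ and 2 < μ < 5. Then (0,0) is algebraic critical: for every α ≠ 0 the equation has a local algebraic solution of the form w(z) = (1/(2−μ))·z² + α·z^μ + (terms with strictly larger rational exponents), so there are infinitely many distinct nonconstant local algebraic solutions at (0,0). -/
open MvPolynomial

noncomputable section AuxProof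
/-- Coefficients of the Puiseux solution, defined by recursion. -/
noncomputable def cfAux (N M : ℕ) (a0 α : ℂ) : ℕ → ℂ := fun k =>
  if k = 2 * N then a0
  else if k = M then α
  else if h : 5 * N ≤ k ∧ 0 < N then
    -(∑ p ∈ (Finset.HasAntidiagonal.antidiagonal (k - 5 * N)).attach,
        (∑ q ∈ (Finset.HasAntidiagonal.antidiagonal p.1.1).attach,
            cfAux N M a0 α (q.1.1 + 2 * N) * cfAux N M a0 α (q.1.2 + 2 * N)) *
          (((p.1.2 + 2 * N : ℕ) : ℂ) * cfAux N M a0 α (p.1.2 + 2 * N))) /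
      ((k : ℂ) - (M : ℂ))
  else 0
termination_by k => k
decreasing_by
  · have h1 := Finset.HasAntidiagonal.mem_antidiagonal.mp p.2
    have h2 := Finset.HasAntidiagonal.mem_antidiagonal.mp q.2
    omega
  · have h1 := Finset.HasAntidiagonal.mem_antidiagonal.mp p.2
    have h2 := Finset.HasAntidiagonal.mem_antidiagonal.mp q.2
    omega
  · have h1 := Finset.HasAntidiagonal.mem_antidiagonal.mp p.2
    omega

noncomputable def psiS (N : ℕ) (c : ℕ → ℂ) : PowerSeries ℂ :=
  PowerSeries.mk fun j => c (j + 2 * N)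
noncomputable def psiD (N : ℕ) (c : ℕ → ℂ) : PowerSeries ℂ :=
  PowerSeries.mk fun j => ((j + 2 * N : ℕ) : ℂ) * c (j + 2 * N)
noncomputable def phiS (c : ℕ → ℂ) : PowerSeries ℂ := PowerSeries.mk c

lemma coeff_X_pow_mul' (ψ : PowerSeries ℂ) (n d : ℕ) :
    PowerSeries.coeff (R := ℂ) d (PowerSeries.X ^ n * ψ) =
      if n ≤ d then PowerSeries.coeff (R := ℂ) (d - n) ψ else 0 := by
  split_ifs with h
  · obtain ⟨j, rfl⟩ := Nat.exists_eq_add_of_le h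
    rw [Nat.add_sub_cancel_left]
    have : n + j = j + n := by omega
    rw [this, PowerSeries.coeff_X_pow_mul]
  · rw [PowerSeries.coeff_mul]
    apply Finset.sum_eq_zero
    intro p hp
    have hp' := Finset.HasAntidiagonal.mem_antidiagonal.mp hp
    rw [PowerSeries.coeff_X_pow, if_neg (by omega)]
    ring

section facts
variable {N : ℕ} (c : ℕ → ℂ)

lemma phi_fact (hN : 0 < N) (hz : ∀ k, k < 2 * N → c k = 0) :
    phiS c = PowerSeries.X ^ (2 * N) * psiS N c := by
  ext d
  rw [coeff_X_pow_mul']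
  split_ifs with h
  · simp only [phiS, psiS, PowerSeries.coeff_mk]
    congr 1
    omega
  · simp only [phiS, PowerSeries.coeff_mk]
    exact hz d (by omega)

lemma dphi_fact (hN : 0 < N) (hz : ∀ k, k < 2 * N → c k = 0) :
    dSeries (phiS c) = PowerSeries.X ^ (2 * N - 1) * psiD N c := by
  ext d
  rw [coeff_X_pow_mul']
  simp only [dSeries, phiS, psiD, PowerSeries.coeff_mk]
  split_ifs with h
  · have : d - (2 * N - 1) + 2 * N = d + 1 := by omega
    rw [this]
  · rw [hz (d + 1) (by omega), mul_zero]

lemma triple_fact (hN : 0 < N) (hz : ∀ k, k < 2 * N → c k = 0) :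
    phiS c * phiS c * dSeries (phiS c) =
      PowerSeries.X ^ (6 * N - 1) * (psiS N c * psiS N c * psiD N c) := by
  rw [dphi_fact c hN hz, phi_fact c hN hz]
  rw [show 6 * N - 1 = 2 * N + (2 * N + (2 * N - 1)) by omega]
  rw [pow_add, pow_add]
  ring

end facts

section key
variable {N M : ℕ} {a0 α μc : ℂ}

lemma cfAux_eq_zero (h2 : 2 * N < M) {k : ℕ} (hk : k < 2 * N) :
    cfAux N M a0 α k = 0 := by
  rw [cfAux, if_neg (by omega), if_neg (by omega), dif_neg (by omega)]

lemma cfAux_small {k : ℕ} (hk1 : k ≠ 2 * N) (hk2 : k ≠ M) (hk3 : k < 5 * N) :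
    cfAux N M a0 α k = 0 := by
  rw [cfAux, if_neg hk1, if_neg hk2, dif_neg (by omega)]

lemma cfAux_unfold (hN : 0 < N) {k : ℕ} (hk : 5 * N ≤ k) (h2 : 2 * N < M) (h5 : M < 5 * N) :
    cfAux N M a0 α k =
      -(PowerSeries.coeff (R := ℂ) (k - 5 * N)
          (psiS N (cfAux N M a0 α) * psiS N (cfAux N M a0 α) * psiD N (cfAux N M a0 α))) /
        ((k : ℂ) - (M : ℂ)) := by
  rw [cfAux, if_neg (by omega), if_neg (by omega), dif_pos ⟨hk, hN⟩]
  have h1 := Finset.sum_attach (Finset.HasAntidiagonal.antidiagonal (k - 5 * N))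
    (fun p : ℕ × ℕ => (∑ q ∈ (Finset.HasAntidiagonal.antidiagonal p.1).attach,
        cfAux N M a0 α (q.1.1 + 2 * N) * cfAux N M a0 α (q.1.2 + 2 * N)) *
      (((p.2 + 2 * N : ℕ) : ℂ) * cfAux N M a0 α (p.2 + 2 * N)))
  rw [h1]
  congr 1
  congr 1
  rw [PowerSeries.coeff_mul]
  apply Finset.sum_congr rfl
  intro p hp
  have h2' := Finset.sum_attach (Finset.HasAntidiagonal.antidiagonal p.1)
    (fun q : ℕ × ℕ => cfAux N M a0 α (q.1 + 2 * N) * cfAux N M a0 α (q.2 + 2 * N))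
  rw [h2', PowerSeries.coeff_mul]
  simp [psiS, psiD, PowerSeries.coeff_mk]

lemma cfAux_key (hN : 0 < N) (h2 : 2 * N < M) (h5 : M < 5 * N)
    (ha0 : (((2 * N : ℕ) : ℂ) - (M : ℂ)) * a0 = (N : ℂ)) (k : ℕ) :
    (k : ℂ) * cfAux N M a0 α k +
      (if 5 * N ≤ k then
         PowerSeries.coeff (R := ℂ) (k - 5 * N)
           (psiS N (cfAux N M a0 α) * psiS N (cfAux N M a0 α) * psiD N (cfAux N M a0 α))
       else 0) =
    (if k = 2 * N then (N : ℂ) else 0) + (M : ℂ) * cfAux N M a0 α k := by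
  by_cases hk5 : 5 * N ≤ k
  · rw [if_pos hk5, if_neg (by omega)]
    have hMk : (k : ℂ) - (M : ℂ) ≠ 0 := by
      rw [sub_ne_zero]
      exact_mod_cast (by omega : k ≠ M)
    rw [cfAux_unfold hN hk5 h2 h5]
    field_simp
    ring
  · rw [if_neg hk5]
    by_cases hk2 : k = 2 * N
    · subst hk2
      rw [if_pos rfl]
      have : cfAux N M a0 α (2 * N) = a0 := by rw [cfAux, if_pos rfl]
      rw [this]
      push_cast at ha0 ⊢
      linear_combination ha0
    · rw [if_neg hk2]
      by_cases hkM : k = M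
      · have : cfAux N M a0 α k = α := by rw [cfAux, if_neg hk2, if_pos hkM]
        rw [this, hkM]
        ring
      · rw [cfAux_small hk2 hkM (by omega)]
        ring

lemma main_series (hN : 0 < N) (h2 : 2 * N < M) (h5 : M < 5 * N)
    (ha0 : (((2 * N : ℕ) : ℂ) - (M : ℂ)) * a0 = (N : ℂ))
    (hμ : (N : ℂ) * μc = (M : ℂ)) :
    (PowerSeries.X ^ N + phiS (cfAux N M a0 α) ^ 2) * dSeries (phiS (cfAux N M a0 α)) =
      ((N : ℕ) : PowerSeries ℂ) * PowerSeries.X ^ (N - 1) *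
        ((PowerSeries.X ^ N) ^ 2 + PowerSeries.C (R := ℂ) μc * phiS (cfAux N M a0 α)) := by
  set c : ℕ → ℂ := cfAux N M a0 α with hc
  have hz : ∀ k, k < 2 * N → c k = 0 := fun k hk => cfAux_eq_zero h2 hk
  have hRHS : ((N : ℕ) : PowerSeries ℂ) * PowerSeries.X ^ (N - 1) *
      ((PowerSeries.X ^ N) ^ 2 + PowerSeries.C (R := ℂ) μc * phiS c) =
      PowerSeries.C (R := ℂ) (N : ℂ) * PowerSeries.X ^ (3 * N - 1) +
        PowerSeries.C (R := ℂ) ((N : ℂ) * μc) * (PowerSeries.X ^ (N - 1) * phiS c) := by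
    rw [← map_natCast (PowerSeries.C (R := ℂ)) N, ← pow_mul, map_mul,
      show 3 * N - 1 = N - 1 + N * 2 by omega, pow_add]
    ring
  rw [hRHS, sq, add_mul, triple_fact _ hN hz]
  ext d
  rw [map_add, map_add, coeff_X_pow_mul', coeff_X_pow_mul', PowerSeries.coeff_C_mul,
    PowerSeries.coeff_C_mul, PowerSeries.coeff_X_pow, coeff_X_pow_mul']
  simp only [dSeries, phiS, PowerSeries.coeff_mk]
  by_cases hd : N - 1 ≤ d
  · obtain ⟨k, rfl⟩ : ∃ k, d = k + (N - 1) := ⟨d - (N - 1), by omega⟩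
    have e1 : (if N ≤ k + (N - 1) then
        ((k + (N - 1) - N + 1 : ℕ) : ℂ) * c (k + (N - 1) - N + 1) else 0) = (k : ℂ) * c k := by
      split_ifs with h
      · rw [show k + (N - 1) - N + 1 = k by omega]
      · have hk0 : k = 0 := by omega
        simp [hk0]
    have e2 : (if 6 * N - 1 ≤ k + (N - 1) then
        PowerSeries.coeff (R := ℂ) (k + (N - 1) - (6 * N - 1)) (psiS N c * psiS N c * psiD N c)
        else 0) =
        (if 5 * N ≤ k then
          PowerSeries.coeff (R := ℂ) (k - 5 * N) (psiS N c * psiS N c * psiD N c) else 0) := by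
      split_ifs with h h' h'
      · rw [show k + (N - 1) - (6 * N - 1) = k - 5 * N by omega]
      · omega
      · omega
      · rfl
    have e3 : (if k + (N - 1) = 3 * N - 1 then (1 : ℂ) else 0) =
        (if k = 2 * N then (1 : ℂ) else 0) := by
      split_ifs with h h' h' <;> first | rfl | omega
    rw [e1, e2, e3, if_pos hd, show k + (N - 1) - (N - 1) = k by omega]
    have hkey := cfAux_key (α := α) hN h2 h5 ha0 k
    rw [← hc] at hkey
    rw [hμ, mul_ite, mul_one, mul_zero]
    exact hkey
  · rw [if_neg (by omega), if_neg (by omega), if_neg (by omega), if_neg (by omega)]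
    simp
end key

/-- Encoding of `Σ c_k z^{k/N}` as a function `ℚ → ℂ`. -/
noncomputable def cQf (N : ℕ) (c : ℕ → ℂ) : ℚ → ℂ := fun q =>
  if 0 < q ∧ (q * (N : ℚ)).den = 1 then c (q * (N : ℚ)).num.toNat else 0

lemma cQf_natdiv (N : ℕ) (hN : 0 < N) (c : ℕ → ℂ) (c0 : c 0 = 0) (k : ℕ) :
    cQf N c ((k : ℚ) / (N : ℚ)) = c k := by
  have hN' : (N : ℚ) ≠ 0 := Nat.cast_ne_zero.mpr hN.ne'
  have hqk : ((k : ℚ) / (N : ℚ)) * (N : ℚ) = (k : ℚ) := div_mul_cancel₀ _ hN'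
  rcases Nat.eq_zero_or_pos k with rfl | hk
  · rw [cQf, if_neg]
    · exact c0.symm
    · simp
  · rw [cQf, if_pos, hqk]
    · simp
    · constructor
      · positivity
      · rw [hqk]; simp

lemma toSeries_cQf (N : ℕ) (hN : 0 < N) (c : ℕ → ℂ) (c0 : c 0 = 0) :
    toSeries N (cQf N c) = PowerSeries.mk c := by
  ext k
  rw [toSeries, PowerSeries.coeff_mk, PowerSeries.coeff_mk, cQf_natdiv N hN c c0]

lemma cQf_supp (N : ℕ) (hN : 0 < N) (c : ℕ → ℂ) (q : ℚ) (h : cQf N c q ≠ 0) :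
    0 < q ∧ ∃ k : ℕ, q = (k : ℚ) / (N : ℚ) := by
  rw [cQf] at h
  split_ifs at h with hcond
  swap
  · exact absurd rfl h
  obtain ⟨hq, hden⟩ := hcond
  refine ⟨hq, (q * (N : ℚ)).num.toNat, ?_⟩
  have hN' : (N : ℚ) ≠ 0 := Nat.cast_ne_zero.mpr hN.ne'
  have hpos : 0 < q * (N : ℚ) := by positivity
  have hnpos : 0 < (q * (N : ℚ)).num := Rat.num_pos.mpr hpos
  have hnum : (((q * (N : ℚ)).num.toNat : ℕ) : ℚ) = ((q * (N : ℚ)).num : ℚ) := by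
    exact_mod_cast congrArg (Int.cast : ℤ → ℚ) (Int.toNat_of_nonneg hnpos.le)
  have h2 : ((q * (N : ℚ)).num : ℚ) = q * (N : ℚ) := (Rat.den_eq_one_iff _).mp hden
  rw [eq_div_iff hN', hnum, h2]

lemma shiftP_zero (P : MvPolynomial (Fin 2) ℂ) : shiftP P 0 0 = P := by
  have h : ![(X 0 : MvPolynomial (Fin 2) ℂ) + C 0, (X 1 : MvPolynomial (Fin 2) ℂ) + C 0] =
      MvPolynomial.X := by
    funext i; fin_cases i <;> simp
  rw [shiftP, h, MvPolynomial.aeval_X_left_apply]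

lemma substS_Q (N : ℕ) (φ : PowerSeries ℂ) :
    substS ((X 0 : MvPolynomial (Fin 2) ℂ) + X 1 ^ 2) N φ = PowerSeries.X ^ N + φ ^ 2 := by
  simp [substS]

lemma substS_P (N : ℕ) (μc : ℂ) (φ : PowerSeries ℂ) :
    substS ((X 0 : MvPolynomial (Fin 2) ℂ) ^ 2 + C μc * X 1) N φ =
      (PowerSeries.X ^ N) ^ 2 + PowerSeries.C (R := ℂ) μc * φ := by
  simp [substS, PowerSeries.C_eq_algebraMap]

end AuxProof

/-- **(paper, example).** For `(z + w²)·dw/dz = z² + μ·w` with `μ ∈ ℚ`, `2 < μ < 5`,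
the point `(0,0)` is algebraic critical: for every `α ≠ 0` there is a local algebraic
solution of the form `w(z) = (1/(2-μ))·z² + α·z^μ + (terms with strictly larger
exponents)`. -/
theorem example_critical_two_five (μ : ℚ) (h1 : 2 < μ) (h2 : μ < 5) :
    IsAlgCritical ((X 0 : MvPolynomial (Fin 2) ℂ) ^ 2 + C (μ : ℂ) * X 1)
      ((X 0 : MvPolynomial (Fin 2) ℂ) + X 1 ^ 2) 0 0 ∧
    ∀ α : ℂ, α ≠ 0 →
      ∃ c ∈ localSols ((X 0 : MvPolynomial (Fin 2) ℂ) ^ 2 + C (μ : ℂ) * X 1)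
          ((X 0 : MvPolynomial (Fin 2) ℂ) + X 1 ^ 2) 0 0,
        c 2 = 1 / (2 - (μ : ℂ)) ∧ c μ = α ∧
          ∀ q : ℚ, q ≠ 2 → q < μ → c q = 0 := by
  set N : ℕ := μ.den with hNdef
  set M : ℕ := μ.num.toNat with hMdef
  have hN : 0 < N := μ.pos
  have hN' : (N : ℚ) ≠ 0 := Nat.cast_ne_zero.mpr hN.ne'
  have hNpos : (0 : ℚ) < N := by positivity
  have hμpos : (0 : ℚ) < μ := by linarith
  have hnum : (M : ℤ) = μ.num := Int.toNat_of_nonneg (Rat.num_pos.mpr hμpos).le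
  have hμeq : (M : ℚ) / (N : ℚ) = μ := by
    rw [show ((M : ℕ) : ℚ) = ((μ.num : ℤ) : ℚ) from by
      exact_mod_cast congrArg (Int.cast : ℤ → ℚ) hnum]
    exact Rat.num_div_den μ
  have hμN : μ * (N : ℚ) = (M : ℚ) := by rw [← hμeq]; field_simp
  have h2N : 2 * N < M := by
    have hh : (2 : ℚ) * N < (M : ℚ) := by
      calc (2 : ℚ) * N < μ * N := by exact mul_lt_mul_of_pos_right h1 hNpos
        _ = M := hμN
    exact_mod_cast hh
  have h5N : M < 5 * N := by
    have hh : (M : ℚ) < 5 * N := by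
      calc (M : ℚ) = μ * N := hμN.symm
        _ < 5 * N := by exact mul_lt_mul_of_pos_right h2 hNpos
    exact_mod_cast hh
  have hμc : (N : ℂ) * (μ : ℂ) = (M : ℂ) := by
    have h' : (N : ℚ) * μ = (M : ℚ) := by linarith
    exact_mod_cast h'
  have hμ2 : (μ : ℂ) ≠ 2 := by
    intro hcon
    have : μ = (2 : ℚ) := by exact_mod_cast hcon
    linarith
  have h2μ : (2 : ℂ) - (μ : ℂ) ≠ 0 := sub_ne_zero.mpr fun hcon => hμ2 hcon.symm
  set a0 : ℂ := 1 / (2 - (μ : ℂ)) with ha0def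
  have ha0 : (((2 * N : ℕ) : ℂ) - (M : ℂ)) * a0 = (N : ℂ) := by
    rw [ha0def]
    field_simp
    push_cast
    linear_combination hμc
  have c0 : ∀ β : ℂ, cfAux N M a0 β 0 = 0 := fun β => cfAux_eq_zero h2N (by omega)
  have hμval : ∀ β : ℂ, cQf N (cfAux N M a0 β) μ = β := by
    intro β
    rw [← hμeq, cQf_natdiv N hN _ (c0 β), cfAux, if_neg (by omega), if_pos rfl]
  have h2val : ∀ β : ℂ, cQf N (cfAux N M a0 β) 2 = a0 := by
    intro β
    have h22 : ((2 * N : ℕ) : ℚ) / (N : ℚ) = 2 := by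
      push_cast
      field_simp
    rw [← h22, cQf_natdiv N hN _ (c0 β), cfAux, if_pos rfl]
  have hvan : ∀ β : ℂ, ∀ q : ℚ, q ≠ 2 → q < μ → cQf N (cfAux N M a0 β) q = 0 := by
    intro β q hq2 hqμ
    by_contra hne
    obtain ⟨hqpos, k, hk⟩ := cQf_supp N hN _ q hne
    rw [hk, cQf_natdiv N hN _ (c0 β)] at hne
    have hkM : k < M := by
      rw [hk] at hqμ
      have h' := (div_lt_iff₀ hNpos).mp hqμ
      rw [hμN] at h'
      exact_mod_cast h'
    have hk2N : k ≠ 2 * N := by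
      intro hcon
      apply hq2
      rw [hk, hcon]
      push_cast
      field_simp
    exact hne (cfAux_small hk2N (by omega) (by omega))
  have hmem : ∀ β : ℂ, β ≠ 0 →
      cQf N (cfAux N M a0 β) ∈ localSols ((X 0 : MvPolynomial (Fin 2) ℂ) ^ 2 + C (μ : ℂ) * X 1)
        ((X 0 : MvPolynomial (Fin 2) ℂ) + X 1 ^ 2) 0 0 := by
    intro β hβ
    refine ⟨?_, ?_⟩
    · intro hcon
      exact hβ (by rw [← hμval β, hcon]; rfl)
    · rw [shiftP_zero, shiftP_zero]
      refine ⟨N, hN, fun q hq => cQf_supp N hN _ q hq, ?_⟩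
      rw [toSeries_cQf N hN _ (c0 β), substS_Q, substS_P]
      exact main_series hN h2N h5N ha0 hμc
  constructor
  · apply Set.infinite_of_injective_forall_mem
      (f := fun n : ℕ => cQf N (cfAux N M a0 ((n : ℂ) + 1)))
    · intro a b hab
      have h := congrFun hab μ
      dsimp only at h
      rw [hμval, hμval] at h
      have := add_right_cancel h
      exact_mod_cast this
    · intro n
      refine hmem _ ?_
      exact Nat.cast_add_one_ne_zero n
  · intro β hβ
    exact ⟨_, hmem β hβ, h2val β, hμval β, hvan β⟩
end
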